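/- Let W be a finite group acting by ring automorphisms on a commutative ring R, with invariant subring R^W, and let I ⊆ R be an ideal. Let ψ : R → (R/I) ⊗_{R^W} R be the ring homomorphism x ↦ 1 ⊗ x. Then a prime ideal of R contains ker(ψ) if and only if it contains w(I) for some w ∈ W; equivalently, the radical of ker(ψ) equals the radical of ⋂_{w∈W} w(I), i.e. the closed image of the second projection Spec((R/I) ⊗_{R^W} R) → Spec(R) is the finite union ⋃_{w∈W} V(w(I)). -/

import Mathlib

/-!
Let a finite group `W` act on a commutative ring `R` by ring automorphisms, with invariant
subring `R^W`, and let `I ⊆ R` be an ideal.  Let `ψ : R → (R/I) ⊗_{R^W} R` be the ring map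
`x ↦ 1 ⊗ x`.  Then a prime ideal of `R` contains `ker ψ` if and only if it contains `w(I)` for
some `w ∈ W` (i.e. the closed image of `Spec((R/I) ⊗_{R^W} R) → Spec R` is `⋃_w V(w(I))`).
-/

open scoped TensorProduct

set_option synthInstance.maxHeartbeats 1000000
set_option maxHeartbeats 2000000

noncomputable section

/-- The invariant subring `R^W` of a group action by ring automorphisms. -/
def invariantSubring (W : Type) [Group W] (R : Type) [CommRing R] [MulSemiringAction W R] :
    Subring R where
  carrier := {r | ∀ w : W, w • r = r}
  zero_mem' := fun w => by simp
  one_mem' := fun w => by simp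
  add_mem' := fun hs ht w => by rw [smul_add, hs w, ht w]
  mul_mem' := fun hs ht w => by rw [smul_mul', hs w, ht w]
  neg_mem' := fun hs w => by rw [smul_neg, hs w]

variable (W : Type) [Group W] (R : Type) [CommRing R] [MulSemiringAction W R] (I : Ideal R)

/-- The canonical map `ψ : R → (R/I) ⊗_{R^W} R`, `x ↦ 1 ⊗ x`. -/
def psiMap : R →ₐ[invariantSubring W R] ((R ⧸ I) ⊗[invariantSubring W R] R) :=
  Algebra.TensorProduct.includeRight

/-!
If `w(I) ⊆ 𝔭`, then `a ⊗ b ↦ w(a) b` is a well-defined map `(R/I) ⊗_{R^W} R → R/w(I)`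
(because `w` fixes `R^W`), through which `R → R/w(I)` factors; hence `ker ψ ⊆ w(I) ⊆ 𝔭`.
Conversely, for `x ∈ I` the norm `∏_w w • x` is invariant and lies in `I`, so `1 ⊗ ∏_w w • x`
vanishes and the norm lies in `ker ψ ⊆ 𝔭`. Thus `I` is covered by the finitely many primes
`w⁻¹(𝔭)`, and prime avoidance puts `I` inside one of them.
-/

def smulAlgHom (w : W) : R →ₐ[invariantSubring W R] R :=
  { MulSemiringAction.toRingHom W R w with commutes' := fun a => a.2 w }

def tensorToQuotientMap (w : W) :
    (R ⧸ I) ⊗[invariantSubring W R] R →ₐ[invariantSubring W R]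
      R ⧸ I.map (MulSemiringAction.toRingHom W R w) :=
  Algebra.TensorProduct.productMap
    (Ideal.quotientMapₐ _ (smulAlgHom W R w) Ideal.le_comap_map) (Ideal.Quotient.mkₐ _ _)

theorem tensorToQuotientMap_comp_psiMap (w : W) :
    (tensorToQuotientMap W R I w).comp (psiMap W R I) = Ideal.Quotient.mkₐ _ _ :=
  Algebra.TensorProduct.productMap_right _ _

theorem ker_psiMap_le_map (w : W) :
    RingHom.ker (psiMap W R I) ≤ I.map (MulSemiringAction.toRingHom W R w) := by
  intro x hx
  rw [← Ideal.Quotient.eq_zero_iff_mem, ← Ideal.Quotient.mkₐ_eq_mk (invariantSubring W R),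
    ← tensorToQuotientMap_comp_psiMap, AlgHom.comp_apply, RingHom.mem_ker.1 hx, map_zero]

theorem mem_ker_psiMap_of_mem_invariantSubring {a : R} (ha : a ∈ invariantSubring W R)
    (haI : a ∈ I) : a ∈ RingHom.ker (psiMap W R I) := by
  set a' : invariantSubring W R := ⟨a, ha⟩
  have ha'R : a' • (1 : R) = a := mul_one a
  have ha'I : a' • (1 : R ⧸ I) = 0 := (mul_one _).trans (Ideal.Quotient.eq_zero_iff_mem.2 haI)
  rw [RingHom.mem_ker, psiMap, Algebra.TensorProduct.includeRight_apply,
    ← ha'R, ← TensorProduct.smul_tmul, ha'I, TensorProduct.zero_tmul]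

theorem prod_smul_mem_invariantSubring [Fintype W] (x : R) :
    ∏ w : W, w • x ∈ invariantSubring W R :=
  Finset.smul_prod_perm x

theorem prod_smul_mem_ker_psiMap [Fintype W] {x : R} (hx : x ∈ I) :
    ∏ w : W, w • x ∈ RingHom.ker (psiMap W R I) :=
  mem_ker_psiMap_of_mem_invariantSubring W R I (prod_smul_mem_invariantSubring W R x)
    (I.prod_mem (Finset.mem_univ 1) (by rwa [one_smul]))

theorem exists_map_le_of_ker_psiMap_le [Finite W] {p : Ideal R} (hp : p.IsPrime)
    (h : RingHom.ker (psiMap W R I) ≤ p) :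
    ∃ w : W, I.map (MulSemiringAction.toRingHom W R w) ≤ p := by
  have := Fintype.ofFinite W
  have hcover : (I : Set R) ⊆ ⋃ w ∈ Set.univ, p.comap (MulSemiringAction.toRingHom W R w) := by
    intro x hx
    obtain ⟨w, -, hw⟩ := hp.prod_mem_iff.1 (h (prod_smul_mem_ker_psiMap W R I hx))
    exact Set.mem_biUnion (Set.mem_univ w) hw
  obtain ⟨w, -, hw⟩ := (Ideal.subset_union_prime_finite Set.finite_univ 1 1
    fun w _ _ _ => hp.comap _).1 hcover
  exact ⟨w, Ideal.map_le_iff_le_comap.2 hw⟩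

/-- **Support of `(R/I) ⊗_{R^W} R` over `Spec R`.**  A prime ideal of `R` contains the kernel
of `ψ : R → (R/I) ⊗_{R^W} R` if and only if it contains `w(I)` for some `w ∈ W`. -/
theorem ker_tensor_over_invariants_le_prime_iff
    [Finite W] (p : Ideal R) (hp : p.IsPrime) :
    RingHom.ker (psiMap W R I) ≤ p ↔
      ∃ w : W, I.map (MulSemiringAction.toRingHom W R w) ≤ p :=
  ⟨exists_map_le_of_ker_psiMap_le W R I hp, fun ⟨w, hw⟩ => (ker_psiMap_le_map W R I w).trans hw⟩

end
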